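/- Fix y ∈ ℝ, ε > 0 and ν > 0, and define Ψ₀(m) = ∫ 2·max(0, |y − η| − ε) φ(η; m, ν²) dη. Then for every m ∈ ℝ, the derivative of Ψ₀ with respect to m equals 2[ 1 − Φ(y + ε; m, ν²) − Φ(y − ε; m, ν²) ]. -/

import Mathlib

open MeasureTheory Real Filter

/-- Gaussian density with mean `m` and variance `ν ^ 2`, evaluated at `x`:
`φ(x; m, ν²) = (2πν²)^{-1/2} exp(−(x−m)²/(2ν²))`. -/
noncomputable def gpdf (m ν x : ℝ) : ℝ :=
  (Real.sqrt (2 * Real.pi * ν ^ 2))⁻¹ * Real.exp (-((x - m) ^ 2) / (2 * ν ^ 2))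

/-- Gaussian cumulative distribution function with mean `m` and variance `ν ^ 2`:
`Φ(c; m, ν²) = ∫_{−∞}^{c} φ(η; m, ν²) dη`. -/
noncomputable def gcdf (m ν c : ℝ) : ℝ := ∫ x in Set.Iio c, gpdf m ν x
/-!
Translating the integration variable moves the mean into the loss:
`Ψ₀(m) = ∫ L(t + m) φ(t; 0, ν²) dt` with `L(x) = 2·max(0, |y − x| − ε)`.
Since `L` is 2-Lipschitz, dominated differentiation under the integral sign gives
`Ψ₀'(m) = ∫ L'(η) φ(η; m, ν²) dη`, where `L' = 2` on `(y + ε, ∞)`, `-2` on `(-∞, y - ε)` and `0`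
in between (off two null points). Integrating against the Gaussian density gives
`2 (1 − Φ(y + ε)) − 2 Φ(y − ε)`.
-/

open Set ProbabilityTheory
open scoped NNReal

section LipschitzConvolution

variable {f g : ℝ → ℝ} {K : ℝ≥0}

theorem LipschitzWith.integrable_comp_add_mul (hf : LipschitzWith K f) (hg : Integrable g)
    (hg' : Integrable fun t => t * g t) (m : ℝ) : Integrable fun t => f (t + m) * g t := by
  refine ((hg.norm.const_mul ‖f m‖).add (hg'.norm.const_mul K)).mono'
    ((hf.continuous.comp (continuous_add_const m)).aestronglyMeasurable.mul hg.1)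
    (ae_of_all _ fun t => ?_)
  have hft : ‖f (t + m)‖ ≤ ‖f m‖ + K * ‖t‖ := by
    have := hf.dist_le_mul (t + m) m
    rw [dist_eq_norm, dist_eq_norm, add_sub_cancel_right] at this
    linarith [norm_le_norm_add_norm_sub' (f (t + m)) (f m)]
  simp only [Pi.add_apply, norm_mul]
  nlinarith [norm_nonneg (g t)]

theorem LipschitzWith.hasDerivAt_integral_comp_add_mul (hf : LipschitzWith K f) (hg : Integrable g)
    (hg' : Integrable fun t => t * g t) (m : ℝ) :
    HasDerivAt (fun m' => ∫ t, f (t + m') * g t) (∫ t, deriv f (t + m) * g t) m := by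
  have h_lip (t : ℝ) :
      LipschitzOnWith (Real.nnabs (K * ‖g t‖)) (fun m' => f (t + m') * g t) univ := by
    refine LipschitzOnWith.of_dist_le_mul fun a _ b _ => ?_
    rw [Real.coe_nnabs, abs_of_nonneg (by positivity), dist_eq_norm, ← sub_mul, norm_mul,
      ← dist_eq_norm]
    calc dist (f (t + a)) (f (t + b)) * ‖g t‖ ≤ K * dist a b * ‖g t‖ := by
          gcongr; simpa using hf.dist_le_mul (t + a) (t + b)
      _ = K * ‖g t‖ * dist a b := by ring
  -- Rademacher, transported by the translation `t ↦ t + m`, which preserves null sets.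
  have h_diff : ∀ᵐ t, HasDerivAt (fun m' => f (t + m') * g t) (deriv f (t + m) * g t) m := by
    filter_upwards [(measurePreserving_add_right volume m).quasiMeasurePreserving.ae
      hf.ae_differentiableAt_real] with t ht
    simpa using (ht.hasDerivAt.comp m ((hasDerivAt_id m).const_add t)).mul_const (g t)
  exact (hasDerivAt_integral_of_dominated_loc_of_lip univ_mem
    (Eventually.of_forall fun m' => (hf.integrable_comp_add_mul hg hg' m').1)
    (hf.integrable_comp_add_mul hg hg' m)
    (((measurable_deriv f).comp (measurable_add_const m)).aestronglyMeasurable.mul hg.1)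
    (ae_of_all _ h_lip) (hg.norm.const_mul K) h_diff).2

end LipschitzConvolution

section Gaussian

variable {ν : ℝ}

theorem gpdf_eq_gaussianPDFReal (m ν : ℝ) : gpdf m ν = gaussianPDFReal m ⟨ν ^ 2, sq_nonneg ν⟩ :=
  rfl

theorem gpdf_add_mean (m ν t : ℝ) : gpdf m ν (t + m) = gpdf 0 ν t := by
  simp [gpdf]

theorem integrable_gpdf (m ν : ℝ) : Integrable (gpdf m ν) := by
  rw [gpdf_eq_gaussianPDFReal]
  exact integrable_gaussianPDFReal _ _

theorem integral_gpdf (m : ℝ) (hν : ν ≠ 0) : ∫ x, gpdf m ν x = 1 := by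
  rw [gpdf_eq_gaussianPDFReal]
  refine integral_gaussianPDFReal_eq_one m fun h => hν ?_
  exact pow_eq_zero_iff two_ne_zero |>.1 (congrArg NNReal.toReal h)

theorem integrable_id_mul_gpdf_zero (hν : ν ≠ 0) : Integrable fun t => t * gpdf 0 ν t := by
  have hb : 0 < (2 * ν ^ 2)⁻¹ := by positivity
  refine ((integrable_mul_exp_neg_mul_sq hb).const_mul (√(2 * π * ν ^ 2))⁻¹).congr
    (ae_of_all _ fun t => ?_)
  simp only [gpdf, sub_zero]
  ring_nf

theorem setIntegral_Ioi_gpdf (m c : ℝ) (hν : ν ≠ 0) :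
    ∫ x in Ioi c, gpdf m ν x = 1 - gcdf m ν c := by
  have h := integral_add_compl (measurableSet_Iic (a := c)) (integrable_gpdf m ν)
  rw [compl_Iic, integral_gpdf m hν, setIntegral_congr_set Iio_ae_eq_Iic.symm] at h
  rw [gcdf]
  linarith

theorem LipschitzWith.hasDerivAt_integral_mul_gpdf {f : ℝ → ℝ} {K : ℝ≥0} (hf : LipschitzWith K f)
    (hν : ν ≠ 0) (m : ℝ) :
    HasDerivAt (fun m' => ∫ x, f x * gpdf m' ν x) (∫ x, deriv f x * gpdf m ν x) m := by
  have shift : ∀ (h : ℝ → ℝ) m', ∫ x, h x * gpdf m' ν x = ∫ t, h (t + m') * gpdf 0 ν t :=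
    fun h m' => by
      rw [← integral_add_right_eq_self (fun x => h x * gpdf m' ν x) m']
      simp only [gpdf_add_mean]
  rw [funext (shift f), shift (deriv f)]
  exact hf.hasDerivAt_integral_comp_add_mul (integrable_gpdf 0 ν) (integrable_id_mul_gpdf_zero hν) m

end Gaussian

section EpsInsensitiveLoss

variable {y ε ν : ℝ}

theorem lipschitzWith_epsInsensitive (y ε : ℝ) :
    LipschitzWith 2 fun x : ℝ => 2 * max 0 (|y - x| - ε) := by
  refine LipschitzWith.of_dist_le_mul fun a b => ?_
  simp only [Real.dist_eq, NNReal.coe_ofNat]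
  rw [← mul_sub, abs_mul, abs_two]
  refine mul_le_mul_of_nonneg_left ?_ zero_le_two
  calc |max 0 (|y - a| - ε) - max 0 (|y - b| - ε)| ≤ |(|y - a| - ε) - (|y - b| - ε)| := by
        rw [max_comm 0, max_comm 0]
        exact abs_max_sub_max_le_abs _ _ _
    _ = |(|y - a| - |y - b|)| := by ring_nf
    _ ≤ |(y - a) - (y - b)| := abs_abs_sub_abs_le_abs_sub _ _
    _ = |a - b| := by rw [sub_sub_sub_cancel_left, abs_sub_comm]

theorem hasDerivAt_epsInsensitive (hε : 0 ≤ ε) {x : ℝ} (h₁ : x ≠ y - ε) (h₂ : x ≠ y + ε) :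
    HasDerivAt (fun x => 2 * max 0 (|y - x| - ε))
      ((Ioi (y + ε)).indicator (fun _ => 2) x - (Iio (y - ε)).indicator (fun _ => 2) x) x := by
  rcases h₁.lt_or_gt with hlow | hlow
  · have hd : HasDerivAt (fun x => 2 * (y - x - ε)) (-2) x := by
      simpa using (((hasDerivAt_id x).const_sub y).sub_const ε).const_mul 2
    rw [indicator_of_notMem (by simp only [mem_Ioi]; linarith), indicator_of_mem (mem_Iio.2 hlow),
      zero_sub]
    refine hd.congr_of_eventuallyEq ?_
    filter_upwards [Iio_mem_nhds hlow] with z hz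
    rw [mem_Iio] at hz
    rw [abs_of_pos (by linarith), max_eq_right (by linarith)]
  rcases h₂.lt_or_gt with hhigh | hhigh
  · rw [indicator_of_notMem (by simp only [mem_Ioi]; linarith),
      indicator_of_notMem (by simp only [mem_Iio]; linarith), sub_zero]
    refine (hasDerivAt_const x 0).congr_of_eventuallyEq ?_
    filter_upwards [Ioo_mem_nhds hlow hhigh] with z ⟨hz₁, hz₂⟩
    have hz : |y - z| < ε := abs_sub_lt_iff.2 ⟨by linarith, by linarith⟩
    rw [max_eq_left (by linarith), mul_zero]
  · have hd : HasDerivAt (fun x => 2 * (x - y - ε)) 2 x := by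
      simpa using (((hasDerivAt_id x).sub_const y).sub_const ε).const_mul 2
    rw [indicator_of_mem (mem_Ioi.2 hhigh), indicator_of_notMem (by simp only [mem_Iio]; linarith),
      sub_zero]
    refine hd.congr_of_eventuallyEq ?_
    filter_upwards [Ioi_mem_nhds hhigh] with z hz
    rw [mem_Ioi] at hz
    rw [abs_of_neg (by linarith), max_eq_right (by linarith)]
    ring

theorem integral_deriv_epsInsensitive_mul_gpdf (hε : 0 ≤ ε) (hν : ν ≠ 0) (m : ℝ) :
    ∫ η, deriv (fun x => 2 * max 0 (|y - x| - ε)) η * gpdf m ν η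
      = 2 * (1 - gcdf m ν (y + ε) - gcdf m ν (y - ε)) := by
  have hae : (fun η => deriv (fun x => 2 * max 0 (|y - x| - ε)) η * gpdf m ν η)
      =ᵐ[volume] fun η => (Ioi (y + ε)).indicator (fun x => 2 * gpdf m ν x) η
        - (Iio (y - ε)).indicator (fun x => 2 * gpdf m ν x) η := by
    filter_upwards [compl_mem_ae_iff.2 (measure_singleton (y - ε)),
      compl_mem_ae_iff.2 (measure_singleton (y + ε))] with η h₁ h₂
    rw [(hasDerivAt_epsInsensitive hε h₁ h₂).deriv, sub_mul, indicator_mul_left,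
      indicator_mul_left]
  have h2gpdf := (integrable_gpdf m ν).const_mul 2
  rw [integral_congr_ae hae, integral_sub (h2gpdf.indicator measurableSet_Ioi)
      (h2gpdf.indicator measurableSet_Iio), integral_indicator measurableSet_Ioi,
    integral_indicator measurableSet_Iio, integral_const_mul, integral_const_mul,
    setIntegral_Ioi_gpdf m _ hν]
  unfold gcdf
  ring

end EpsInsensitiveLoss

theorem svr_Psi1 (y ε ν : ℝ) (hε : 0 < ε) (hν : 0 < ν) (m : ℝ) :
    HasDerivAt (fun m' => ∫ η, 2 * max 0 (|y - η| - ε) * gpdf m' ν η)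
      (2 * (1 - gcdf m ν (y + ε) - gcdf m ν (y - ε))) m := by
  have h := (lipschitzWith_epsInsensitive y ε).hasDerivAt_integral_mul_gpdf hν.ne' m
  rwa [integral_deriv_epsInsensitive_mul_gpdf hε.le hν.ne'] at h
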